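/- Let G ⊂ ℝⁿ be a convex body, let u ∈ 𝕊ⁿ⁻¹ be a unit vector, and let t > 0 satisfy t < h_G(u) − min_{x ∈ G} ⟨u, x⟩. Define C_t := C_G(u,t) and S_t := G ∩ {x ∈ ℝⁿ : ⟨u, x⟩ = h_G(u) − t}. Then (G + C_t) \ (G + S_t) ⊆ C_t + C_t. -/
import Mathlib


open MeasureTheory Metric Pointwise
open scoped RealInnerProductSpace

/-- Support function `h_G(u) = sup_{x ∈ G} ⟪u, x⟫`. -/
noncomputable def suppFn {n : ℕ} (G : Set (EuclideanSpace ℝ (Fin n)))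
    (u : EuclideanSpace ℝ (Fin n)) : ℝ :=
  sSup ((fun x => ⟪u, x⟫) '' G)

/-- `min_{x ∈ G} ⟪u, x⟫`. -/
noncomputable def infFn {n : ℕ} (G : Set (EuclideanSpace ℝ (Fin n)))
    (u : EuclideanSpace ℝ (Fin n)) : ℝ :=
  sInf ((fun x => ⟪u, x⟫) '' G)

/-- The cap of `G` in direction `u` with height `h`:
`C_G(u,h) = {x ∈ G : ⟪u, x⟫ ≥ h_G(u) − h}`. -/
noncomputable def capG {n : ℕ} (G : Set (EuclideanSpace ℝ (Fin n)))
    (u : EuclideanSpace ℝ (Fin n)) (h : ℝ) : Set (EuclideanSpace ℝ (Fin n)) :=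
  {x ∈ G | suppFn G u - h ≤ ⟪u, x⟫}

theorem stmt14 {n : ℕ} (G : Set (EuclideanSpace ℝ (Fin n)))
    (hGcv : Convex ℝ G) (hGcp : IsCompact G) (hGint : (interior G).Nonempty)
    (u : EuclideanSpace ℝ (Fin n)) (hu : ‖u‖ = 1)
    (t : ℝ) (ht : 0 < t) (ht' : t < suppFn G u - infFn G u) :
    (G + capG G u t) \
        (G + (G ∩ {x : EuclideanSpace ℝ (Fin n) | ⟪u, x⟫ = suppFn G u - t})) ⊆
      capG G u t + capG G u t := by
  rintro z ⟨hz1, hz2⟩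
  rw [Set.mem_add] at hz1
  obtain ⟨g, hg, c, hc, rfl⟩ := hz1
  obtain ⟨hcG, hcip⟩ := hc
  by_cases hcase : suppFn G u - t ≤ ⟪u, g⟫
  · exact Set.add_mem_add ⟨hg, hcase⟩ ⟨hcG, hcip⟩
  · push_neg at hcase
    exfalso
    apply hz2
    set α := ⟪u, g⟫ with hα
    set β := ⟪u, c⟫ with hβ
    have hβα : 0 < β - α := by linarith
    set s : ℝ := (suppFn G u - t - α) / (β - α) with hs
    have hs0 : 0 ≤ s := div_nonneg (by linarith) hβα.le
    have hs1 : s ≤ 1 := (div_le_one hβα).mpr (by linarith)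
    have hsmul : s * (β - α) = suppFn G u - t - α := div_mul_cancel₀ _ hβα.ne'
    set a := (1 - s) • g + s • c with ha
    set b := (1 - s) • c + s • g with hb
    have haG : a ∈ G := hGcv hg hcG (by linarith) hs0 (by ring)
    have hbG : b ∈ G := hGcv hcG hg (by linarith) hs0 (by ring)
    have haip : ⟪u, a⟫ = suppFn G u - t := by
      rw [ha, inner_add_right, real_inner_smul_right, real_inner_smul_right, ← hα, ← hβ]
      nlinarith [hsmul]
    rw [Set.mem_add]
    exact ⟨b, hbG, a, ⟨haG, haip⟩, by rw [ha, hb]; module⟩
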